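/- (Kinetic shaping identity.) Let m, l > 0, m̄ > 0, χ ∈ ℝ³, let 𝕀 be a symmetric 3×3 real matrix, and let ρ ∈ ℝ with ρ ≠ 0 and ρ ≠ m̄. Define K(Ω, w) = ½ Ω·𝕀Ω + m l w·(Ω × χ) + ½ m̄ ‖w‖², τ(Ω) = (1/ρ − 1/m̄) m l (Ω × χ), and the controlled kinetic energy K_{τ,σ,ρ}(Ω, v) = K(Ω, v + τ(Ω)) + ½ (m̄ρ/(ρ − m̄)) ‖τ(Ω)‖² + ½ (ρ − m̄) ‖v + (m l/m̄)(Ω × χ) + τ(Ω)‖². Then for all Ω, v ∈ ℝ³: K_{τ,σ,ρ}(Ω, v) = ½ Ω·𝕀Ω + m l v·(Ω × χ) + ½ ρ ‖v‖². In particular, the gradient identities ∇_Ω K_{τ,σ,ρ}(Ω,v) = 𝕀Ω + m l (χ × v) = ∇_Ω K(Ω,v) and ∇_v K_{τ,σ,ρ}(Ω,v) = ρ v + m l (Ω × χ) = ∇_v K(Ω,v) + (ρ − m̄) v hold. -/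

import Mathlib

/-!
Writing `c = Ω × χ`, the shift `τ(Ω)` is chosen so that `v + (m l/m̄) c + τ(Ω) = v + (m l/ρ) c`.
Expanding the three terms of `K_{τ,σ,ρ}`, every contribution proportional to `‖c‖²` cancels and the
cross terms recombine, so `K_{τ,σ,ρ}` is `K` with the base mass `m̄` replaced by `ρ`. Both
energies are then a quadratic form plus a linear term in each argument, whose gradients are read
off from the product rule for the dot product, using the symmetry of `𝕀` for the `Ω`-gradient.
-/

open Matrix

/-- Kinetic energy `K(Ω,w) = ½ Ω·𝕀Ω + m l w·(Ω×χ) + ½ m̄ ‖w‖²`. -/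
noncomputable def kinK (m mbar l : ℝ) (χ : Fin 3 → ℝ) (I : Matrix (Fin 3) (Fin 3) ℝ)
    (Ω w : Fin 3 → ℝ) : ℝ :=
  (1 / 2) * (Ω ⬝ᵥ I *ᵥ Ω) + m * l * (w ⬝ᵥ Ω ⨯₃ χ) + (1 / 2) * mbar * (w ⬝ᵥ w)

/-- `τ(Ω) = (1/ρ − 1/m̄) m l (Ω × χ)`. -/
noncomputable def tauMap (m mbar l ρ : ℝ) (χ : Fin 3 → ℝ) (Ω : Fin 3 → ℝ) : Fin 3 → ℝ :=
  ((1 / ρ - 1 / mbar) * (m * l)) • (Ω ⨯₃ χ)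

/-- The controlled kinetic energy
`K_{τ,σ,ρ}(Ω,v) = K(Ω, v + τ(Ω)) + ½ (m̄ρ/(ρ−m̄)) ‖τ(Ω)‖²
  + ½ (ρ−m̄) ‖v + (m l/m̄)(Ω×χ) + τ(Ω)‖²`. -/
noncomputable def kinKc (m mbar l ρ : ℝ) (χ : Fin 3 → ℝ) (I : Matrix (Fin 3) (Fin 3) ℝ)
    (Ω v : Fin 3 → ℝ) : ℝ :=
  kinK m mbar l χ I Ω (v + tauMap m mbar l ρ χ Ω)
    + (1 / 2) * (mbar * ρ / (ρ - mbar)) * (tauMap m mbar l ρ χ Ω ⬝ᵥ tauMap m mbar l ρ χ Ω)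
    + (1 / 2) * (ρ - mbar) *
      ((v + (m * l / mbar) • (Ω ⨯₃ χ) + tauMap m mbar l ρ χ Ω) ⬝ᵥ
        (v + (m * l / mbar) • (Ω ⨯₃ χ) + tauMap m mbar l ρ χ Ω))

section QuadraticGradient

variable {𝕜 n : Type*} [RCLike 𝕜] [Fintype n]

theorem fderiv_half_dotProduct_mulVec_self_add_dotProduct_apply {M : Matrix n n 𝕜}
    (hM : Mᵀ = M) (b x δ : n → 𝕜) :
    fderiv 𝕜 (fun y => (1 / 2) * (y ⬝ᵥ M *ᵥ y) + y ⬝ᵥ b) x δ = δ ⬝ᵥ (M *ᵥ x + b) := by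
  have hlin : HasFDerivAt (fun y => y ⬝ᵥ b) _ x :=
    ((dotProductBilin 𝕜 𝕜).flip b).toContinuousLinearMap.hasFDerivAt
  have hquad : HasFDerivAt (fun y => y ⬝ᵥ M *ᵥ y) _ x :=
    (dotProductBilin 𝕜 𝕜).toContinuousBilinearMap.hasFDerivAt_of_bilinear (hasFDerivAt_id x)
      M.mulVecLin.toContinuousLinearMap.hasFDerivAt
  have hsum : HasFDerivAt (fun y => (1 / 2) * (y ⬝ᵥ M *ᵥ y) + y ⬝ᵥ b) _ x :=
    (hquad.const_mul (1 / 2)).add hlin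
  rw [hsum.fderiv]
  have hsym : x ⬝ᵥ M *ᵥ δ = δ ⬝ᵥ M *ᵥ x := by
    rw [dotProduct_mulVec, ← mulVec_transpose, hM, dotProduct_comm]
  simp [hsym, dotProduct_add, ← two_mul]

end QuadraticGradient

section KineticEnergy

variable {m mbar l : ℝ} {χ : Fin 3 → ℝ} {I : Matrix (Fin 3) (Fin 3) ℝ}

theorem fderiv_kinK_fst_apply (hI : Iᵀ = I) (Ω v δ : Fin 3 → ℝ) :
    fderiv ℝ (fun Ω' => kinK m mbar l χ I Ω' v) Ω δ
      = δ ⬝ᵥ (I *ᵥ Ω + (m * l) • (χ ⨯₃ v)) := by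
  have hK : (fun Ω' => kinK m mbar l χ I Ω' v) = fun Ω' =>
      ((1 / 2) * (Ω' ⬝ᵥ I *ᵥ Ω') + Ω' ⬝ᵥ (m * l) • (χ ⨯₃ v)) + (1 / 2) * mbar * (v ⬝ᵥ v) := by
    funext Ω'
    rw [kinK, triple_product_permutation v, dotProduct_smul, smul_eq_mul]
  rw [hK, fderiv_add_const, fderiv_half_dotProduct_mulVec_self_add_dotProduct_apply hI]

theorem fderiv_kinK_snd_apply (Ω v δ : Fin 3 → ℝ) :
    fderiv ℝ (fun v' => kinK m mbar l χ I Ω v') v δ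
      = δ ⬝ᵥ (mbar • v + (m * l) • (Ω ⨯₃ χ)) := by
  have hK : (fun v' => kinK m mbar l χ I Ω v') = fun v' =>
      ((1 / 2) * (v' ⬝ᵥ (mbar • 1 : Matrix (Fin 3) (Fin 3) ℝ) *ᵥ v')
        + v' ⬝ᵥ (m * l) • (Ω ⨯₃ χ)) + (1 / 2) * (Ω ⬝ᵥ I *ᵥ Ω) := by
    funext v'
    simp only [kinK, smul_mulVec, one_mulVec, dotProduct_smul, smul_eq_mul]
    ring
  have hsym : (mbar • 1 : Matrix (Fin 3) (Fin 3) ℝ)ᵀ = mbar • 1 := by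
    rw [transpose_smul, transpose_one]
  rw [hK, fderiv_add_const, fderiv_half_dotProduct_mulVec_self_add_dotProduct_apply hsym,
    smul_mulVec, one_mulVec]

theorem kinKc_eq_kinK {ρ : ℝ} (hmbar : mbar ≠ 0) (hρ : ρ ≠ 0) (hρm : ρ ≠ mbar)
    (Ω v : Fin 3 → ℝ) :
    kinKc m mbar l ρ χ I Ω v = kinK m ρ l χ I Ω v := by
  have hρm' : ρ - mbar ≠ 0 := sub_ne_zero.mpr hρm
  simp only [kinKc, kinK, tauMap, dotProduct_add, add_dotProduct, dotProduct_smul,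
    smul_dotProduct, smul_eq_mul, dotProduct_comm (Ω ⨯₃ χ) v]
  field_simp
  ring

end KineticEnergy

theorem kinetic_shaping_identity_general (m mbar l ρ : ℝ)
    (hmbar : 0 < mbar) (χ : Fin 3 → ℝ) (I : Matrix (Fin 3) (Fin 3) ℝ) (hI : Iᵀ = I)
    (hρ : ρ ≠ 0) (hρm : ρ ≠ mbar) :
    (∀ Ω v : Fin 3 → ℝ,
      kinKc m mbar l ρ χ I Ω v
        = (1 / 2) * (Ω ⬝ᵥ I *ᵥ Ω) + m * l * (v ⬝ᵥ Ω ⨯₃ χ) + (1 / 2) * ρ * (v ⬝ᵥ v)) ∧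
    (∀ Ω v δ : Fin 3 → ℝ,
      fderiv ℝ (fun Ω' => kinKc m mbar l ρ χ I Ω' v) Ω δ
          = δ ⬝ᵥ (I *ᵥ Ω + (m * l) • (χ ⨯₃ v)) ∧
      fderiv ℝ (fun Ω' => kinK m mbar l χ I Ω' v) Ω δ
          = δ ⬝ᵥ (I *ᵥ Ω + (m * l) • (χ ⨯₃ v))) ∧
    (∀ Ω v δ : Fin 3 → ℝ,
      fderiv ℝ (fun v' => kinKc m mbar l ρ χ I Ω v') v δ
          = δ ⬝ᵥ (ρ • v + (m * l) • (Ω ⨯₃ χ)) ∧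
      fderiv ℝ (fun v' => kinK m mbar l χ I Ω v') v δ + (ρ - mbar) * (δ ⬝ᵥ v)
          = δ ⬝ᵥ (ρ • v + (m * l) • (Ω ⨯₃ χ))) := by
  have hK : ∀ Ω v, kinKc m mbar l ρ χ I Ω v = kinK m ρ l χ I Ω v :=
    kinKc_eq_kinK hmbar.ne' hρ hρm
  refine ⟨hK, fun Ω v δ => ⟨?_, fderiv_kinK_fst_apply hI Ω v δ⟩, fun Ω v δ => ⟨?_, ?_⟩⟩
  · simpa only [hK] using fderiv_kinK_fst_apply hI Ω v δ
  · simpa only [hK] using fderiv_kinK_snd_apply Ω v δ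
  · rw [fderiv_kinK_snd_apply]
    simp only [dotProduct_add, dotProduct_smul, smul_eq_mul]
    ring

/-- Kinetic shaping identity: `K_{τ,σ,ρ}(Ω,v) = ½ Ω·𝕀Ω + m l v·(Ω×χ) + ½ ρ ‖v‖²`,
together with the gradient identities
`∇_Ω K_{τ,σ,ρ} = 𝕀Ω + m l (χ×v) = ∇_Ω K` and
`∇_v K_{τ,σ,ρ} = ρ v + m l (Ω×χ) = ∇_v K + (ρ−m̄) v`
(gradients with respect to the dot product, expressed via `fderiv`). -/
theorem kinetic_shaping_identity (m mbar l ρ : ℝ) (hm : 0 < m) (hl : 0 < l)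
    (hmbar : 0 < mbar) (χ : Fin 3 → ℝ) (I : Matrix (Fin 3) (Fin 3) ℝ) (hI : Iᵀ = I)
    (hρ : ρ ≠ 0) (hρm : ρ ≠ mbar) :
    (∀ Ω v : Fin 3 → ℝ,
      kinKc m mbar l ρ χ I Ω v
        = (1 / 2) * (Ω ⬝ᵥ I *ᵥ Ω) + m * l * (v ⬝ᵥ Ω ⨯₃ χ) + (1 / 2) * ρ * (v ⬝ᵥ v)) ∧
    (∀ Ω v δ : Fin 3 → ℝ,
      fderiv ℝ (fun Ω' => kinKc m mbar l ρ χ I Ω' v) Ω δ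
          = δ ⬝ᵥ (I *ᵥ Ω + (m * l) • (χ ⨯₃ v)) ∧
      fderiv ℝ (fun Ω' => kinK m mbar l χ I Ω' v) Ω δ
          = δ ⬝ᵥ (I *ᵥ Ω + (m * l) • (χ ⨯₃ v))) ∧
    (∀ Ω v δ : Fin 3 → ℝ,
      fderiv ℝ (fun v' => kinKc m mbar l ρ χ I Ω v') v δ
          = δ ⬝ᵥ (ρ • v + (m * l) • (Ω ⨯₃ χ)) ∧
      fderiv ℝ (fun v' => kinK m mbar l χ I Ω v') v δ + (ρ - mbar) * (δ ⬝ᵥ v)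
          = δ ⬝ᵥ (ρ • v + (m * l) • (Ω ⨯₃ χ))) :=
  kinetic_shaping_identity_general m mbar l ρ hmbar χ I hI hρ hρm
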